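/- arXiv:math/0503666 — 3 statements merged into one kernel-verified Lean document; each statement's English description precedes it below -/
import Mathlib

section
/- The comparability graph of a finite partially ordered set is a perfect graph. -/
/-- A graph is perfect if for every induced subgraph the chromatic number equals
the maximum cardinality of a clique. -/
def IsPerfectGraph {V : Type*} (G : SimpleGraph V) : Prop :=
  ∀ s : Set V, (G.induce s).chromaticNumber = ((G.induce s).cliqueNum : ℕ∞)

open Order in
lemma comp_chrom_aux {β : Type*} [Fintype β] [PartialOrder β] (H : SimpleGraph β)
    (h : ∀ i j : β, H.Adj i j ↔ i ≠ j ∧ (i ≤ j ∨ j ≤ i)) :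
    H.chromaticNumber = (H.cliqueNum : ℕ∞) := by
  classical
  -- heights are finite
  have hfin : ∀ x : β, height x < ⊤ := by
    intro x
    refine lt_of_le_of_lt (b := (Fintype.card β : ℕ∞)) ?_ (by simp)
    apply height_le
    intro p _
    have hinj : Function.Injective p := p.strictMono.injective
    have := Fintype.card_le_of_injective p hinj
    simp only [Fintype.card_fin] at this
    exact_mod_cast Nat.le_of_succ_le this
  -- chains give cliques
  have hclq : ∀ x : β, (height x).toNat < H.cliqueNum := by
    intro x
    have hx : height x = ((height x).toNat : ℕ∞) := (ENat.coe_toNat (hfin x).ne).symm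
    obtain ⟨p, hlast, hlen⟩ := exists_series_of_height_eq_coe x hx
    set t : Finset β := Finset.image p Finset.univ with ht
    have hcard : t.card = p.length + 1 := by
      rw [ht, Finset.card_image_of_injective _ p.strictMono.injective, Finset.card_univ,
        Fintype.card_fin]
    have hcl : H.IsClique (t : Set β) := by
      intro a ha b hb hab
      simp only [ht, Finset.coe_image, Set.mem_image] at ha hb
      obtain ⟨i, -, rfl⟩ := ha
      obtain ⟨j, -, rfl⟩ := hb
      rw [h]
      refine ⟨hab, ?_⟩
      rcases le_total i j with hij | hij
      · exact Or.inl (p.monotone hij)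
      · exact Or.inr (p.monotone hij)
    have := hcl.card_le_cliqueNum
    omega
  -- the coloring by height
  have hcol : H.Colorable H.cliqueNum := by
    refine ⟨SimpleGraph.Coloring.mk (fun x => ⟨(height x).toNat, hclq x⟩) ?_⟩
    intro a b hab
    rw [h] at hab
    obtain ⟨hne, hle⟩ := hab
    have : height a ≠ height b := by
      rcases hle with hle | hle
      · exact (height_strictMono (lt_of_le_of_ne hle hne) (hfin a)).ne
      · exact (height_strictMono (lt_of_le_of_ne hle (Ne.symm hne)) (hfin b)).ne'
    simp only [Ne, Fin.mk.injEq]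
    intro hEq
    exact this (by rw [(ENat.coe_toNat (hfin a).ne).symm, (ENat.coe_toNat (hfin b).ne).symm, hEq])
  refine le_antisymm (hcol.chromaticNumber_le) ?_
  obtain ⟨s, hs⟩ := H.exists_isNClique_cliqueNum
  have := hs.isClique.card_le_chromaticNumber
  rwa [hs.card_eq] at this

/-- The comparability graph of a finite poset is perfect. -/
theorem stmt5 {α : Type*} [Fintype α] [PartialOrder α] (G : SimpleGraph α)
    (hcomp : ∀ i j : α, G.Adj i j ↔ i ≠ j ∧ (i ≤ j ∨ j ≤ i)) :
    IsPerfectGraph G := by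
  classical
  intro s
  have : Fintype s := Set.Finite.fintype (Set.toFinite s)
  exact comp_chrom_aux (G.induce s) (by
    intro i j
    simp only [SimpleGraph.comap_adj, Function.Embedding.coe_subtype, hcomp,
      ← Subtype.coe_ne_coe, Subtype.coe_le_coe])
end

section
/- Let G be a perfect graph on [n] all of whose maximal cliques have cardinality q, and let W_0, W_1, ..., W_q be the stable sets constructed from a proper q-coloring by splitting the color class W'_1 containing a fixed vertex i_0 (W_0 = {i_0}, W_1 = W'_1 \ {i_0}, W_ℓ = W'_ℓ for ℓ ≥ 2). For every maximal clique W of G, exactly q of the q+1 vectors ρ(W_0), ..., ρ(W_q) lie on the hyperplane {x ∈ ℝ^n : ∑_{i∈W} x_i = 1}; specifically, ρ(W_ℓ) lies on it for all 2 ≤ ℓ ≤ q, and exactly one of ρ(W_0), ρ(W_1) lies on it, according to whether i_0 ∈ W or i_0 ∉ W. -/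
/-- Indicator vector of a finite vertex set. -/
def indic {n : ℕ} (W : Finset (Fin n)) : Fin n → ℝ := fun i => if i ∈ W then 1 else 0

/-- `W` is a stable (independent) set of `G`. -/
def IsStableSet {n : ℕ} (G : SimpleGraph (Fin n)) (W : Finset (Fin n)) : Prop :=
  ∀ i ∈ W, ∀ j ∈ W, ¬ G.Adj i j

/-- `W` is a maximal clique of `G`. -/
def IsMaxCliqueSet {n : ℕ} (G : SimpleGraph (Fin n)) (W : Finset (Fin n)) : Prop :=
  G.IsClique ↑W ∧ ∀ W' : Finset (Fin n), G.IsClique ↑W' → W ⊆ W' → W = W'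

/-- The color class of color `ℓ` under the coloring `φ`. -/
def classOf {n q : ℕ} (φ : Fin n → Fin q) (ℓ : Fin q) : Finset (Fin n) :=
  Finset.univ.filter (fun i => φ i = ℓ)


lemma sum_indic_eq_card {n : ℕ} (W A : Finset (Fin n)) :
    ∑ i ∈ W, indic A i = ((W.filter (· ∈ A)).card : ℝ) := by
  unfold indic
  rw [Finset.sum_boole]

theorem stmt13 {n q : ℕ} (G : SimpleGraph (Fin n))
    (hperf : IsPerfectGraph G)
    (hmax : ∀ W : Finset (Fin n), IsMaxCliqueSet G W → W.card = q)
    (φ : Fin n → Fin q) (hproper : ∀ i j : Fin n, G.Adj i j → φ i ≠ φ j)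
    (i0 : Fin n)
    (S : Fin (q + 1) → Finset (Fin n))
    (hS0 : S 0 = {i0})
    (hSsucc : ∀ ℓ : Fin q,
      S ℓ.succ = if ℓ = φ i0 then (classOf φ ℓ).erase i0 else classOf φ ℓ)
    (W : Finset (Fin n)) (hW : IsMaxCliqueSet G W) :
    (Finset.univ.filter
        (fun ℓ : Fin (q + 1) => ∑ i ∈ W, indic (S ℓ) i = 1)).card = q ∧
    (∀ ℓ : Fin q, ℓ ≠ φ i0 → ∑ i ∈ W, indic (S ℓ.succ) i = 1) ∧
    ((∑ i ∈ W, indic (S 0) i = 1) ↔ i0 ∈ W) ∧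
    ((∑ i ∈ W, indic (S (φ i0).succ) i = 1) ↔ i0 ∉ W) := by
  have hWq := hmax W hW
  have hinj : ∀ i ∈ W, ∀ j ∈ W, φ i = φ j → i = j := by
    intro i hi j hj hij
    by_contra hne
    exact hproper i j (hW.1 (Finset.mem_coe.mpr hi) (Finset.mem_coe.mpr hj) hne) hij
  have hex : ∀ ℓ : Fin q, ∃ i ∈ W, φ i = ℓ := by
    intro ℓ
    have himg : W.image φ = Finset.univ := by
      apply Finset.eq_univ_of_card
      rw [Finset.card_image_of_injOn (fun i hi j hj => hinj i hi j hj), hWq, Fintype.card_fin]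
    have : ℓ ∈ W.image φ := himg ▸ Finset.mem_univ ℓ
    simpa using this
  have hcard : ∀ ℓ : Fin q, (W.filter (fun i => φ i = ℓ)).card = 1 := by
    intro ℓ
    obtain ⟨i, hi, hφ⟩ := hex ℓ
    rw [Finset.card_eq_one]
    refine ⟨i, ?_⟩
    ext j
    simp only [Finset.mem_filter, Finset.mem_singleton]
    constructor
    · rintro ⟨hj, hφj⟩; exact hinj j hj i hi (hφj.trans hφ.symm)
    · rintro rfl; exact ⟨hi, hφ⟩
  have key : ∀ ℓ : Fin q, ℓ ≠ φ i0 → ∑ i ∈ W, indic (S ℓ.succ) i = 1 := by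
    intro ℓ hℓ
    rw [sum_indic_eq_card, hSsucc, if_neg hℓ]
    have heq : W.filter (· ∈ classOf φ ℓ) = W.filter (fun i => φ i = ℓ) := by
      apply Finset.filter_congr; intro i _; simp [classOf]
    rw [heq, hcard ℓ]; norm_num
  have key0 : (∑ i ∈ W, indic (S 0) i = 1) ↔ i0 ∈ W := by
    rw [sum_indic_eq_card, hS0]
    by_cases h : i0 ∈ W
    · have heq : W.filter (· ∈ ({i0} : Finset (Fin n))) = {i0} := by
        ext j; simp only [Finset.mem_filter, Finset.mem_singleton]
        constructor
        · rintro ⟨_, rfl⟩; rfl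
        · rintro rfl; exact ⟨h, rfl⟩
      rw [heq]; simp [h]
    · have heq : W.filter (· ∈ ({i0} : Finset (Fin n))) = ∅ := by
        ext j; simp only [Finset.mem_filter, Finset.mem_singleton, Finset.notMem_empty,
          iff_false, not_and]
        rintro hj rfl; exact h hj
      rw [heq]; simp [h]
  have keyφ : (∑ i ∈ W, indic (S (φ i0).succ) i = 1) ↔ i0 ∉ W := by
    rw [sum_indic_eq_card, hSsucc, if_pos rfl]
    by_cases h : i0 ∈ W
    · have heq : W.filter (· ∈ (classOf φ (φ i0)).erase i0) = ∅ := by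
        ext j
        simp only [Finset.mem_filter, Finset.mem_erase, Finset.notMem_empty, iff_false,
          classOf, Finset.mem_univ, true_and, not_and]
        intro hj hne hφj
        exact hne (hinj j hj i0 h hφj)
      rw [heq]; simp [h]
    · have heq : W.filter (· ∈ (classOf φ (φ i0)).erase i0)
          = W.filter (fun i => φ i = φ i0) := by
        apply Finset.filter_congr
        intro i hi
        simp only [Finset.mem_erase, classOf, Finset.mem_filter, Finset.mem_univ, true_and]
        constructor
        · exact fun ⟨_, h2⟩ => h2
        · intro h2; exact ⟨fun he => h (he ▸ hi), h2⟩
      rw [heq, hcard]; simp [h]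
  refine ⟨?_, key, key0, keyφ⟩
  classical
  set bad : Fin (q + 1) := if i0 ∈ W then (φ i0).succ else 0 with hbad
  have hfilter : Finset.univ.filter (fun ℓ : Fin (q+1) => ∑ i ∈ W, indic (S ℓ) i = 1)
      = Finset.univ.erase bad := by
    ext ℓ
    simp only [Finset.mem_filter, Finset.mem_univ, true_and, Finset.mem_erase, and_true]
    refine Fin.cases ?_ ?_ ℓ
    · rw [key0, hbad]
      by_cases h : i0 ∈ W
      · simp [h, (Fin.succ_ne_zero (φ i0)).symm]
      · simp [h]
    · intro k
      by_cases hk : k = φ i0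
      · subst hk
        rw [keyφ, hbad]
        by_cases h : i0 ∈ W
        · simp [h]
        · simp only [h, if_false, not_false_iff, true_iff]
          exact Fin.succ_ne_zero (φ i0)
      · simp only [key k hk, true_iff, hbad]
        by_cases h : i0 ∈ W
        · simp only [h, if_true]
          exact fun he => hk ((Fin.succ_injective q) he)
        · simp only [h, if_false]
          exact Fin.succ_ne_zero k
  rw [hfilter, Finset.card_erase_of_mem (Finset.mem_univ _), Finset.card_univ,
    Fintype.card_fin]
  simp
end

section
/- Let G be a finite simple graph on [n] with a perfect matching {e_1, ..., e_m}, and let T be a stable set of G with |N(G;T)| = |T| + 1. Then every edge e_j of the matching with e_j ∩ T = ∅ and e_j ∩ N(G;T) ≠ ∅ satisfies ∑_{i∈T} ρ(e_j)_i < ∑_{i∈N(G;T)} ρ(e_j)_i, while every other matching edge e_k satisfies ∑_{i∈T} ρ(e_k)_i = ∑_{i∈N(G;T)} ρ(e_k)_i; moreover there is exactly one such edge e_j. -/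
/-- Indicator vector of an edge (as an element of `Sym2`). -/
def edgeVec {n : ℕ} (e : Sym2 (Fin n)) : Fin n → ℝ := fun i => if i ∈ e then 1 else 0

/-- A perfect matching of `G`, given as a finite set of edges of `G` that are
pairwise vertex-disjoint and cover all vertices. -/
def IsPerfectMatchingSet {n : ℕ} (G : SimpleGraph (Fin n)) (M : Finset (Sym2 (Fin n))) : Prop :=
  ↑M ⊆ G.edgeSet ∧
  (∀ e ∈ M, ∀ f ∈ M, e ≠ f → ∀ v : Fin n, ¬(v ∈ e ∧ v ∈ f)) ∧
  (∀ v : Fin n, ∃ e ∈ M, v ∈ e)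

/-- The neighbor set `N(G;T)` of a set of vertices `T`. -/
def nbrSet {n : ℕ} (G : SimpleGraph (Fin n)) [DecidableRel G.Adj]
    (T : Finset (Fin n)) : Finset (Fin n) :=
  Finset.univ.filter (fun j => ∃ i ∈ T, G.Adj i j)

theorem stmt15 {n : ℕ} (G : SimpleGraph (Fin n)) [DecidableRel G.Adj]
    (M : Finset (Sym2 (Fin n))) (hM : IsPerfectMatchingSet G M)
    (T : Finset (Fin n)) (hT : IsStableSet G T)
    (hcard : (nbrSet G T).card = T.card + 1) :
    (∀ e ∈ M, ((∀ v ∈ e, v ∉ T) ∧ ∃ v ∈ e, v ∈ nbrSet G T) →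
      ∑ i ∈ T, edgeVec e i < ∑ j ∈ nbrSet G T, edgeVec e j) ∧
    (∀ e ∈ M, ¬((∀ v ∈ e, v ∉ T) ∧ ∃ v ∈ e, v ∈ nbrSet G T) →
      ∑ i ∈ T, edgeVec e i = ∑ j ∈ nbrSet G T, edgeVec e j) ∧
    (∃! e : Sym2 (Fin n), e ∈ M ∧ (∀ v ∈ e, v ∉ T) ∧ ∃ v ∈ e, v ∈ nbrSet G T) := by
  classical
  obtain ⟨hMe, hMd, hMc⟩ := hM
  choose E hEM hvE using hMc
  have huniq : ∀ e ∈ M, ∀ v : Fin n, v ∈ e → e = E v := by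
    intro e he v hv
    by_contra hne
    exact hMd e he (E v) (hEM v) hne v ⟨hv, hvE v⟩
  have hTN : ∀ i ∈ T, i ∉ nbrSet G T := by
    intro i hi hiN
    rw [nbrSet, Finset.mem_filter] at hiN
    obtain ⟨-, j, hj, hadj⟩ := hiN
    exact hT j hj i hi hadj
  have hsum : ∀ (S : Finset (Fin n)) (e : Sym2 (Fin n)),
      ∑ i ∈ S, edgeVec e i = ((S.filter (fun i => i ∈ e)).card : ℝ) := by
    intro S e
    simp [edgeVec, Finset.sum_boole]
  -- partner function
  set f : Fin n → Fin n := fun v => Sym2.Mem.other' (hvE v) with hf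
  have hfmem : ∀ v, s(v, f v) = E v := fun v => Sym2.other_spec' (hvE v)
  have hadjf : ∀ v, G.Adj v (f v) := by
    intro v
    have h1 : E v ∈ G.edgeSet := hMe (hEM v)
    rw [← hfmem v] at h1
    exact h1
  have hfT : ∀ i ∈ T, f i ∈ nbrSet G T := by
    intro i hi
    rw [nbrSet, Finset.mem_filter]
    exact ⟨Finset.mem_univ _, i, hi, hadjf i⟩
  have hmemE : ∀ v w : Fin n, (w ∈ E v ↔ w = v ∨ w = f v) := by
    intro v w
    rw [← hfmem v, Sym2.mem_iff]
  -- filter computations for edges meeting T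
  have hfilters : ∀ e ∈ M, ∀ i ∈ T, i ∈ e →
      (T.filter (fun v => v ∈ e)) = {i} ∧
      ((nbrSet G T).filter (fun v => v ∈ e)) = {f i} := by
    intro e he i hi hie
    have heE : e = E i := huniq e he i hie
    constructor
    · ext v
      simp only [Finset.mem_filter, Finset.mem_singleton]
      constructor
      · rintro ⟨hvT, hve⟩
        rcases (hmemE i v).mp (heE ▸ hve) with h | h
        · exact h
        · exact absurd hvT (h ▸ fun hvT => hTN (f i) hvT (hfT i hi))
      · rintro rfl; exact ⟨hi, hie⟩
    · ext v
      simp only [Finset.mem_filter, Finset.mem_singleton]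
      constructor
      · rintro ⟨hvN, hve⟩
        rcases (hmemE i v).mp (heE ▸ hve) with h | h
        · exact absurd hvN (h ▸ hTN i hi)
        · exact h
      · rintro rfl
        refine ⟨hfT i hi, ?_⟩
        rw [heE, ← hfmem i, Sym2.mem_iff]; right; rfl
  -- the three parts
  have part1 : ∀ e ∈ M, ((∀ v ∈ e, v ∉ T) ∧ ∃ v ∈ e, v ∈ nbrSet G T) →
      ∑ i ∈ T, edgeVec e i < ∑ j ∈ nbrSet G T, edgeVec e j := by
    rintro e he ⟨hA, u, hue, huN⟩
    rw [hsum, hsum]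
    have h1 : (T.filter (fun v => v ∈ e)) = ∅ := by
      apply Finset.filter_eq_empty_iff.mpr
      intro v hv hve
      exact hA v hve hv
    have h2 : 0 < ((nbrSet G T).filter (fun v => v ∈ e)).card := by
      apply Finset.card_pos.mpr
      exact ⟨u, Finset.mem_filter.mpr ⟨huN, hue⟩⟩
    rw [h1]
    simpa using h2
  have part2 : ∀ e ∈ M, ¬((∀ v ∈ e, v ∉ T) ∧ ∃ v ∈ e, v ∈ nbrSet G T) →
      ∑ i ∈ T, edgeVec e i = ∑ j ∈ nbrSet G T, edgeVec e j := by
    intro e he hne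
    rw [hsum, hsum]
    by_cases hA : ∀ v ∈ e, v ∉ T
    · have hB : ¬ ∃ v ∈ e, v ∈ nbrSet G T := fun hB => hne ⟨hA, hB⟩
      push_neg at hB
      have h1 : (T.filter (fun v => v ∈ e)) = ∅ :=
        Finset.filter_eq_empty_iff.mpr (fun v hv hve => hA v hve hv)
      have h2 : ((nbrSet G T).filter (fun v => v ∈ e)) = ∅ :=
        Finset.filter_eq_empty_iff.mpr (fun v hv hve => hB v hve hv)
      rw [h1, h2]
    · push_neg at hA
      obtain ⟨i, hie, hiT⟩ := hA
      obtain ⟨h1, h2⟩ := hfilters e he i hiT hie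
      rw [h1, h2]; simp
  -- injectivity and the special vertex
  have hfinj : Set.InjOn f ↑T := by
    intro i hi j hj hij
    rw [Finset.mem_coe] at hi hj
    by_contra hne
    have hiEj : i ∈ E j := by
      have : f j ∈ E j := (hmemE j (f j)).mpr (Or.inr rfl)
      have hiEi : i ∈ E i := (hmemE i i).mpr (Or.inl rfl)
      have hEE : E i = E j := by
        by_contra hEE
        exact hMd (E i) (hEM i) (E j) (hEM j) hEE (f i)
          ⟨(hmemE i (f i)).mpr (Or.inr rfl), hij ▸ this⟩
      exact hEE ▸ hiEi
    have hjEj : j ∈ E j := (hmemE j j).mpr (Or.inl rfl)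
    have hEij : E j = s(i, j) := (Sym2.mem_and_mem_iff hne).mp ⟨hiEj, hjEj⟩
    have hadj : G.Adj i j := by
      have h1 : E j ∈ G.edgeSet := hMe (hEM j)
      rw [hEij] at h1
      exact h1
    exact hT i hi j hj hadj
  have hScard : (T.image f).card = T.card := Finset.card_image_of_injOn hfinj
  have hSsub : T.image f ⊆ nbrSet G T := by
    intro v hv
    obtain ⟨i, hi, rfl⟩ := Finset.mem_image.mp hv
    exact hfT i hi
  have hsd : (nbrSet G T \ T.image f).card = 1 := by
    rw [Finset.card_sdiff_of_subset hSsub, hScard, hcard]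
    omega
  obtain ⟨w, hw⟩ := Finset.card_eq_one.mp hsd
  have hwN : w ∈ nbrSet G T := (Finset.mem_sdiff.mp (hw ▸ Finset.mem_singleton_self w)).1
  have hwS : w ∉ T.image f := (Finset.mem_sdiff.mp (hw ▸ Finset.mem_singleton_self w)).2
  -- existence & uniqueness
  have hprop : ∀ e, (e ∈ M ∧ (∀ v ∈ e, v ∉ T) ∧ ∃ v ∈ e, v ∈ nbrSet G T) → e = E w := by
    rintro e ⟨he, hA, u, hue, huN⟩
    have huS : u ∉ T.image f := by
      intro huS
      obtain ⟨i, hi, rfl⟩ := Finset.mem_image.mp huS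
      have hufEi : f i ∈ E i := (hmemE i (f i)).mpr (Or.inr rfl)
      have heEi : e = E i := by
        by_contra hne
        exact hMd e he (E i) (hEM i) hne (f i) ⟨hue, hufEi⟩
      exact hA i (heEi ▸ (hmemE i i).mpr (Or.inl rfl)) hi
    have : u ∈ nbrSet G T \ T.image f := Finset.mem_sdiff.mpr ⟨huN, huS⟩
    rw [hw, Finset.mem_singleton] at this
    subst this
    exact huniq e he u hue
  have hEwprop : E w ∈ M ∧ (∀ v ∈ E w, v ∉ T) ∧ ∃ v ∈ E w, v ∈ nbrSet G T := by
    refine ⟨hEM w, ?_, w, hvE w, hwN⟩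
    intro v hv hvT
    have hEwEv : E w = E v := huniq (E w) (hEM w) v hv
    have : w ∈ E v := hEwEv ▸ hvE w
    rcases (hmemE v w).mp this with h | h
    · exact hTN v hvT (h ▸ hwN)
    · exact hwS (Finset.mem_image.mpr ⟨v, hvT, h.symm⟩)
  exact ⟨part1, part2, ⟨E w, hEwprop, fun e he => hprop e he⟩⟩
end
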